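/- arXiv:math/0701448 — 4 statements merged into one kernel-verified Lean document; each statement's English description precedes it below -/
import Mathlib

section
/- For every integer n ≥ 0 and every z ∈ ℂ, M_n(z)ᵀ·J·M_n(z) = J; consequently M_n(z) is invertible with M_n(z)⁻¹ = −J·M_n(z)ᵀ·J. -/
open Matrix

/-- Fundamental matrix-valued solutions of the Jacobi recursion
`y_{n+1} = a_n⁻¹ ((z I - b_n) y_n - a_{n-1}ᵀ y_{n-1})`. -/
noncomputable def matSol {m : ℕ} (a b : ℤ → Matrix (Fin m) (Fin m) ℝ) (z : ℂ)
    (y0 y1 : Matrix (Fin m) (Fin m) ℂ) : ℕ → Matrix (Fin m) (Fin m) ℂ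
  | 0 => y0
  | 1 => y1
  | n + 2 =>
      (((a ((n : ℤ) + 1))⁻¹).map Complex.ofReal) *
        ((z • (1 : Matrix (Fin m) (Fin m) ℂ) - (b ((n : ℤ) + 1)).map Complex.ofReal) *
            matSol a b z y0 y1 (n + 1) -
          ((a (n : ℤ)).map Complex.ofReal)ᵀ * matSol a b z y0 y1 n)

/-- The monodromy-type matrix `ℳ_n(z) = [[θ_n, φ_n], [θ_{n+1}, φ_{n+1}]]`. -/
noncomputable def monodromy {m : ℕ} (a b : ℤ → Matrix (Fin m) (Fin m) ℝ) (n : ℕ) (z : ℂ) :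
    Matrix (Fin m ⊕ Fin m) (Fin m ⊕ Fin m) ℂ :=
  Matrix.fromBlocks (matSol a b z 1 0 n) (matSol a b z 0 1 n)
    (matSol a b z 1 0 (n + 1)) (matSol a b z 0 1 (n + 1))

/-- `P_n = diag(a_nᵀ, I_m)`. -/
noncomputable def Pblock {m : ℕ} (a : ℤ → Matrix (Fin m) (Fin m) ℝ) (n : ℕ) :
    Matrix (Fin m ⊕ Fin m) (Fin m ⊕ Fin m) ℂ :=
  Matrix.fromBlocks (((a (n : ℤ)).map Complex.ofReal)ᵀ) 0 0 1

/-- `J = [[0, I_m], [-I_m, 0]]`. -/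
noncomputable def Jmat (m : ℕ) : Matrix (Fin m ⊕ Fin m) (Fin m ⊕ Fin m) ℂ :=
  Matrix.fromBlocks 0 1 (-1) 0
section Aux

variable {m : ℕ} (a b : ℤ → Matrix (Fin m) (Fin m) ℝ)

private lemma map_ofReal_mul (M N : Matrix (Fin m) (Fin m) ℝ) :
    (M * N).map Complex.ofReal = M.map Complex.ofReal * N.map Complex.ofReal :=
  Matrix.map_mul (f := Complex.ofRealHom)

private lemma A_mul_inv (ha_inv : ∀ n : ℤ, IsUnit (a n).det) (k : ℤ) :
    ((a k).map Complex.ofReal) * (((a k)⁻¹).map Complex.ofReal) = 1 := by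
  rw [← map_ofReal_mul, Matrix.mul_nonsing_inv _ (ha_inv k)]
  simp

private lemma rec_eq (ha_inv : ∀ n : ℤ, IsUnit (a n).det) (z : ℂ)
    (y0 y1 : Matrix (Fin m) (Fin m) ℂ) (n : ℕ) :
    ((a ((n : ℤ) + 1)).map Complex.ofReal) * matSol a b z y0 y1 (n + 2) =
      (z • (1 : Matrix (Fin m) (Fin m) ℂ) - (b ((n : ℤ) + 1)).map Complex.ofReal) *
          matSol a b z y0 y1 (n + 1) -
        ((a (n : ℤ)).map Complex.ofReal)ᵀ * matSol a b z y0 y1 n := by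
  rw [matSol, ← mul_assoc, A_mul_inv a ha_inv, one_mul]

/-- The matrix Wronskian of two solutions. -/
noncomputable def Wron (z : ℂ) (u0 u1 v0 v1 : Matrix (Fin m) (Fin m) ℂ) (n : ℕ) :
    Matrix (Fin m) (Fin m) ℂ :=
  (matSol a b z u0 u1 n)ᵀ * ((a (n : ℤ)).map Complex.ofReal) * matSol a b z v0 v1 (n + 1) -
    (matSol a b z u0 u1 (n + 1))ᵀ * ((a (n : ℤ)).map Complex.ofReal)ᵀ * matSol a b z v0 v1 n

private lemma Wron_succ (hb_sym : ∀ n : ℤ, (b n)ᵀ = b n)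
    (ha_inv : ∀ n : ℤ, IsUnit (a n).det) (z : ℂ)
    (u0 u1 v0 v1 : Matrix (Fin m) (Fin m) ℂ) (n : ℕ) :
    Wron a b z u0 u1 v0 v1 (n + 1) = Wron a b z u0 u1 v0 v1 n := by
  set u := matSol a b z u0 u1 with hu
  set v := matSol a b z v0 v1 with hv
  set C : Matrix (Fin m) (Fin m) ℂ :=
    z • (1 : Matrix (Fin m) (Fin m) ℂ) - (b ((n : ℤ) + 1)).map Complex.ofReal with hC
  have hCt : Cᵀ = C := by
    rw [hC, Matrix.transpose_sub, Matrix.transpose_smul, Matrix.transpose_one,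
      ← Matrix.transpose_map, hb_sym]
  have hv2 : ((a ((n : ℤ) + 1)).map Complex.ofReal) * v (n + 1 + 1) =
      C * v (n + 1) - ((a (n : ℤ)).map Complex.ofReal)ᵀ * v n := rec_eq a b ha_inv z v0 v1 n
  have hu2 : ((a ((n : ℤ) + 1)).map Complex.ofReal) * u (n + 1 + 1) =
      C * u (n + 1) - ((a (n : ℤ)).map Complex.ofReal)ᵀ * u n := rec_eq a b ha_inv z u0 u1 n
  have hu2t : (u (n + 1 + 1))ᵀ * ((a ((n : ℤ) + 1)).map Complex.ofReal)ᵀ =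
      (u (n + 1))ᵀ * C - (u n)ᵀ * ((a (n : ℤ)).map Complex.ofReal) := by
    have := congrArg Matrix.transpose hu2
    rwa [Matrix.transpose_mul, Matrix.transpose_sub, Matrix.transpose_mul, Matrix.transpose_mul,
      hCt, Matrix.transpose_transpose] at this
  have hcast : ((n + 1 : ℕ) : ℤ) = (n : ℤ) + 1 := by push_cast; ring
  unfold Wron
  rw [← hu, ← hv, hcast, mul_assoc, hv2, hu2t]
  noncomm_ring

private lemma Wron_const (hb_sym : ∀ n : ℤ, (b n)ᵀ = b n)
    (ha_inv : ∀ n : ℤ, IsUnit (a n).det) (z : ℂ)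
    (u0 u1 v0 v1 : Matrix (Fin m) (Fin m) ℂ) (n : ℕ) :
    Wron a b z u0 u1 v0 v1 n = Wron a b z u0 u1 v0 v1 0 := by
  induction n with
  | zero => rfl
  | succ k ih => rw [Wron_succ a b hb_sym ha_inv, ih]

private lemma matSol_zero (z : ℂ) (y0 y1 : Matrix (Fin m) (Fin m) ℂ) :
    matSol a b z y0 y1 0 = y0 := rfl

private lemma matSol_one (z : ℂ) (y0 y1 : Matrix (Fin m) (Fin m) ℂ) :
    matSol a b z y0 y1 1 = y1 := rfl

private lemma Wron_tt (hb_sym : ∀ n : ℤ, (b n)ᵀ = b n)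
    (ha_inv : ∀ n : ℤ, IsUnit (a n).det) (z : ℂ) (n : ℕ) :
    Wron a b z 1 0 1 0 n = 0 := by
  rw [Wron_const a b hb_sym ha_inv]
  simp [Wron, matSol_zero, matSol_one]

private lemma Wron_tp (hb_sym : ∀ n : ℤ, (b n)ᵀ = b n)
    (ha_inv : ∀ n : ℤ, IsUnit (a n).det) (z : ℂ) (n : ℕ) :
    Wron a b z 1 0 0 1 n = (a 0).map Complex.ofReal := by
  rw [Wron_const a b hb_sym ha_inv]
  simp [Wron, matSol_zero, matSol_one]

private lemma Wron_pt (hb_sym : ∀ n : ℤ, (b n)ᵀ = b n)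
    (ha_inv : ∀ n : ℤ, IsUnit (a n).det) (z : ℂ) (n : ℕ) :
    Wron a b z 0 1 1 0 n = -((a 0).map Complex.ofReal)ᵀ := by
  rw [Wron_const a b hb_sym ha_inv]
  simp [Wron, matSol_zero, matSol_one]

private lemma Wron_pp (hb_sym : ∀ n : ℤ, (b n)ᵀ = b n)
    (ha_inv : ∀ n : ℤ, IsUnit (a n).det) (z : ℂ) (n : ℕ) :
    Wron a b z 0 1 0 1 n = 0 := by
  rw [Wron_const a b hb_sym ha_inv]
  simp [Wron, matSol_zero, matSol_one]

/-- `(P_n ℳ_n)ᵀ J (P_n ℳ_n) = P_0ᵀ J P_0`, unconjugated form. -/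
private lemma key (hb_sym : ∀ n : ℤ, (b n)ᵀ = b n)
    (ha_inv : ∀ n : ℤ, IsUnit (a n).det) (z : ℂ) (n : ℕ) :
    (Pblock a n * monodromy a b n z)ᵀ * Jmat m * (Pblock a n * monodromy a b n z) =
      Matrix.fromBlocks 0 ((a 0).map Complex.ofReal) (-((a 0).map Complex.ofReal)ᵀ) 0 := by
  have h1 := Wron_tt a b hb_sym ha_inv z n
  have h2 := Wron_tp a b hb_sym ha_inv z n
  have h3 := Wron_pt a b hb_sym ha_inv z n
  have h4 := Wron_pp a b hb_sym ha_inv z n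
  unfold Wron at h1 h2 h3 h4
  simp only [Pblock, monodromy, Jmat, Matrix.fromBlocks_multiply, Matrix.fromBlocks_transpose,
    Matrix.mul_zero, Matrix.zero_mul, Matrix.mul_one, Matrix.one_mul, add_zero, zero_add,
    Matrix.mul_neg, Matrix.neg_mul, Matrix.transpose_zero, Matrix.transpose_one,
    Matrix.transpose_mul, Matrix.transpose_transpose, mul_zero, zero_mul, mul_one, one_mul,
    mul_neg, neg_mul]
  rw [Matrix.fromBlocks_inj]
  refine ⟨?_, ?_, ?_, ?_⟩
  · linear_combination (norm := noncomm_ring) h1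
  · linear_combination (norm := noncomm_ring) h2
  · linear_combination (norm := noncomm_ring) h3
  · linear_combination (norm := noncomm_ring) h4

private lemma P0_key :
    (Pblock a 0)ᵀ * Jmat m * Pblock a 0 =
      Matrix.fromBlocks 0 ((a 0).map Complex.ofReal) (-((a 0).map Complex.ofReal)ᵀ) 0 := by
  simp [Pblock, Jmat, Matrix.fromBlocks_multiply, Matrix.fromBlocks_transpose]

private lemma J_mul_J : Jmat m * Jmat m = -1 := by
  have h1 : Jmat m * Jmat m =
      Matrix.fromBlocks (-1) 0 0 (-1 : Matrix (Fin m) (Fin m) ℂ) := by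
    simp [Jmat, Matrix.fromBlocks_multiply]
  have h2 : (-1 : Matrix (Fin m ⊕ Fin m) (Fin m ⊕ Fin m) ℂ) =
      Matrix.fromBlocks (-1) 0 0 (-1) := by
    rw [← Matrix.fromBlocks_one (l := Fin m) (m := Fin m) (α := ℂ),
      Matrix.fromBlocks_neg, neg_zero]
  rw [h1, h2]

end Aux

/-- Lyapunov–Poincaré symplectic identity: with `M_n(z) = P_n ℳ_n(z) P_0⁻¹`,
one has `M_n(z)ᵀ J M_n(z) = J`, and `M_n(z)` is invertible with inverse `-J M_n(z)ᵀ J`. -/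
theorem symplectic_identity (m p : ℕ) (hm : 1 ≤ m) (hp : 1 ≤ p)
    (a b : ℤ → Matrix (Fin m) (Fin m) ℝ)
    (ha_per : ∀ n : ℤ, a (n + p) = a n) (hb_per : ∀ n : ℤ, b (n + p) = b n)
    (hb_sym : ∀ n : ℤ, (b n)ᵀ = b n) (ha_inv : ∀ n : ℤ, IsUnit (a n).det)
    (n : ℕ) (z : ℂ) :
    (Pblock a n * monodromy a b n z * (Pblock a 0)⁻¹)ᵀ * Jmat m *
        (Pblock a n * monodromy a b n z * (Pblock a 0)⁻¹) = Jmat m ∧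
    (Pblock a n * monodromy a b n z * (Pblock a 0)⁻¹) *
        (-(Jmat m * (Pblock a n * monodromy a b n z * (Pblock a 0)⁻¹)ᵀ * Jmat m)) = 1 ∧
    (-(Jmat m * (Pblock a n * monodromy a b n z * (Pblock a 0)⁻¹)ᵀ * Jmat m)) *
        (Pblock a n * monodromy a b n z * (Pblock a 0)⁻¹) = 1 := by
  have hP0det : IsUnit (Pblock a 0).det := by
    have hmap : (a ((0 : ℕ) : ℤ)).map Complex.ofReal =
        Complex.ofRealHom.mapMatrix (a ((0 : ℕ) : ℤ)) := rfl
    have : (Pblock a 0).det = Complex.ofReal (a ((0 : ℕ) : ℤ)).det := by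
      rw [Pblock, Matrix.det_fromBlocks_zero₂₁, Matrix.det_transpose, Matrix.det_one, mul_one,
        hmap, ← RingHom.map_det]
      rfl
    rw [this]
    exact (ha_inv _).map Complex.ofRealHom
  have hP0 : Pblock a 0 * (Pblock a 0)⁻¹ = 1 := Matrix.mul_nonsing_inv _ hP0det
  set M := Pblock a n * monodromy a b n z * (Pblock a 0)⁻¹ with hM
  have h1 : Mᵀ * Jmat m * M = Jmat m := by
    have hk := key a b hb_sym ha_inv z n
    rw [← P0_key a] at hk
    have : Mᵀ * Jmat m * M =
        ((Pblock a 0)⁻¹)ᵀ * ((Pblock a n * monodromy a b n z)ᵀ * Jmat m *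
          (Pblock a n * monodromy a b n z)) * (Pblock a 0)⁻¹ := by
      rw [hM, Matrix.transpose_mul]
      noncomm_ring
    rw [this, hk, show ((Pblock a 0)⁻¹)ᵀ * ((Pblock a 0)ᵀ * Jmat m * Pblock a 0) *
        (Pblock a 0)⁻¹ = (Pblock a 0 * (Pblock a 0)⁻¹)ᵀ * Jmat m *
        (Pblock a 0 * (Pblock a 0)⁻¹) by rw [Matrix.transpose_mul]; noncomm_ring,
      hP0]
    simp
  refine ⟨h1, ?_, ?_⟩
  · rw [mul_eq_one_comm]
    calc -(Jmat m * Mᵀ * Jmat m) * M = -(Jmat m * (Mᵀ * Jmat m * M)) := by noncomm_ring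
      _ = -(Jmat m * Jmat m) := by rw [h1]
      _ = 1 := by rw [J_mul_J]; simp
  · calc -(Jmat m * Mᵀ * Jmat m) * M = -(Jmat m * (Mᵀ * Jmat m * M)) := by noncomm_ring
      _ = -(Jmat m * Jmat m) := by rw [h1]
      _ = 1 := by rw [J_mul_J]; simp
end

section
/- det W ≠ 0; in particular W is invertible. -/
open Polynomial

/-- Chebyshev polynomials indexed by ℕ. -/
noncomputable def chebP : ℕ → Polynomial ℂ
  | 0 => 1
  | 1 => X
  | (n + 2) => 2 * X * chebP (n + 1) - chebP n

lemma chebP_eq_T (n : ℕ) : chebP n = Polynomial.Chebyshev.T ℂ n := by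
  induction n using Nat.twoStepInduction with
  | zero => simp [chebP, Polynomial.Chebyshev.T_zero]
  | one => simp [chebP, Polynomial.Chebyshev.T_one]
  | more n ih1 ih2 =>
    have h := Polynomial.Chebyshev.T_add_two ℂ (n : ℤ)
    rw [chebP, ih1, ih2]
    push_cast
    rw [h]

lemma chebP_eval_cos (n : ℕ) (θ : ℂ) :
    (chebP n).eval (Complex.cos θ) = Complex.cos ((n : ℂ) * θ) := by
  rw [chebP_eq_T]
  have := Polynomial.Chebyshev.T_complex_cos θ (n : ℤ)
  simpa using this

lemma chebP_deg_lead (n : ℕ) :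
    (chebP n).natDegree = n ∧ (chebP n).coeff n = 2 ^ (n - 1) := by
  induction n using Nat.twoStepInduction with
  | zero => simp [chebP]
  | one => simp [chebP]
  | more n ih1 ih2 =>
    obtain ⟨hd2, hc2⟩ := ih1
    obtain ⟨hd1, hc1⟩ := ih2
    have hC2 : C (2 : ℂ) = 2 := map_ofNat C 2
    have hne : chebP (n + 1) ≠ 0 := by
      intro h
      rw [h] at hc1
      simp at hc1
      exact two_ne_zero (pow_eq_zero_iff' .. |>.mp hc1.symm).1
    have h2X : (2 * X * chebP (n + 1)).natDegree = n + 2 := by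
      have : (2 : Polynomial ℂ) * X * chebP (n + 1) = C 2 * (X * chebP (n + 1)) := by
        rw [hC2]; ring
      rw [this, natDegree_C_mul (two_ne_zero), natDegree_X_mul hne, hd1]
    have hdeg : (chebP (n + 2)).natDegree = n + 2 := by
      rw [chebP, natDegree_sub_eq_left_of_natDegree_lt (by rw [h2X, hd2]; omega), h2X]
    refine ⟨hdeg, ?_⟩
    have hcoeff : (chebP (n + 2)).coeff (n + 2) = 2 * (chebP (n + 1)).coeff (n + 1) := by
      have hz : (chebP n).coeff (n + 2) = 0 :=
        coeff_eq_zero_of_natDegree_lt (by rw [hd2]; omega)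
      rw [chebP, coeff_sub, hz, sub_zero]
      have : (2 : Polynomial ℂ) * X * chebP (n + 1) = C 2 * (X * chebP (n + 1)) := by
        rw [hC2]; ring
      rw [this, coeff_C_mul]
      have : (n + 2) = (n + 1) + 1 := rfl
      rw [this, coeff_X_mul]
    rw [hcoeff, hc1]
    simp
    ring

/-- If `cos κ_r` are pairwise distinct, the matrix `W` with entries
`W_{r,j} = cos (j κ_r)`, `0 ≤ r, j ≤ s`, has nonzero determinant. -/
theorem cos_matrix_det_ne_zero (s : ℕ) (κ : Fin (s + 1) → ℂ)
    (hκ : ∀ r r' : Fin (s + 1), r ≠ r' → Complex.cos (κ r) ≠ Complex.cos (κ r')) :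
    (Matrix.of fun r j : Fin (s + 1) => Complex.cos ((j : ℕ) * κ r)).det ≠ 0 := by
  set v : Fin (s + 1) → ℂ := fun r => Complex.cos (κ r) with hv
  have hM : (Matrix.of fun r j : Fin (s + 1) => Complex.cos ((j : ℕ) * κ r)) =
      Matrix.of fun r j : Fin (s + 1) => (chebP (j : ℕ)).eval (v r) := by
    ext r j
    simp only [Matrix.of_apply, hv, chebP_eval_cos]
  rw [hM, Matrix.eval_matrixOfPolynomials_eq_vandermonde_mul_matrixOfPolynomials v
    (fun j => chebP (j : ℕ)) (fun j => (chebP_deg_lead (j : ℕ)).1.le), Matrix.det_mul]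
  apply mul_ne_zero
  · rw [Matrix.det_vandermonde_ne_zero_iff]
    intro r r' h
    by_contra hne
    exact hκ r r' hne h
  · have hBT : (Matrix.of fun i j : Fin (s + 1) => (chebP (j : ℕ)).coeff i).BlockTriangular id := by
      intro i j hij
      simp only [Matrix.of_apply]
      exact coeff_eq_zero_of_natDegree_lt (by rw [(chebP_deg_lead (j : ℕ)).1]; exact hij)
    rw [Matrix.det_of_upperTriangular hBT]
    apply Finset.prod_ne_zero_iff.mpr
    intro j _
    simp only [Matrix.of_apply, (chebP_deg_lead (j : ℕ)).2]
    exact pow_ne_zero _ two_ne_zero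
end

section
/- For every integer s with 1 ≤ s ≤ p − 1, the trace Tr(L(τ)^s) is the same for all τ ∈ ℂ with τ ≠ 0; equivalently, the power sums Σ_{n=1}^{pm} λ_n(τ)^s of the eigenvalues λ_n(τ) of L(τ) (counted with multiplicity) do not depend on τ. -/
open Matrix

/-!
Lift the cyclic block index of `L(τ)` to `ℤ`. A nonzero entry of `L(1)` moves the block index
by at most one step, except at the two corners, which wrap around the cycle of `p` blocks;
there the lifted index jumps by `∓p` and `L(τ)` carries the factor `τ^{±1}`. Expanding
`L(τ)^s` into words in the single-entry pieces of `L(1)`, a word carrying `τ^D` moves the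
lifted index by `-pD` up to an error of `s`, so it contributes to the diagonal only if
`|pD| ≤ s < p`, i.e. `D = 0`.
-/

/-- The Floquet matrix `L(τ)`: block tridiagonal with diagonal blocks `b_j`,
super/sub-diagonal blocks `a_j`, `a_jᵀ`, and corner blocks `τ⁻¹ a_pᵀ`, `τ a_p`. -/
noncomputable def Lmat (m p : ℕ) (a b : ℤ → Matrix (Fin m) (Fin m) ℝ) (τ : ℂ) :
    Matrix (Fin p × Fin m) (Fin p × Fin m) ℂ :=
  Matrix.of fun q r =>
    (if (q.1 : ℕ) = (r.1 : ℕ) then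
        ((b (((q.1 : ℕ) : ℤ) + 1)).map Complex.ofReal) q.2 r.2 else 0) +
    (if (r.1 : ℕ) = (q.1 : ℕ) + 1 then
        ((a (((q.1 : ℕ) : ℤ) + 1)).map Complex.ofReal) q.2 r.2 else 0) +
    (if (q.1 : ℕ) = (r.1 : ℕ) + 1 then
        ((a (((r.1 : ℕ) : ℤ) + 1)).map Complex.ofReal) r.2 q.2 else 0) +
    (if (q.1 : ℕ) = 0 ∧ (r.1 : ℕ) = p - 1 then
        τ⁻¹ * ((a (p : ℤ)).map Complex.ofReal) r.2 q.2 else 0) +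
    (if (q.1 : ℕ) = p - 1 ∧ (r.1 : ℕ) = 0 then
        τ * ((a (p : ℤ)).map Complex.ofReal) q.2 r.2 else 0)

theorem Fintype.sum_pow_eq_sum_list_prod {κ R : Type*} [Fintype κ] [Semiring R] (f : κ → R)
    (s : ℕ) : (∑ k, f k) ^ s = ∑ w : Fin s → κ, ((List.ofFn w).map f).prod := by
  induction s with
  | zero => simp
  | succ s ih =>
    rw [pow_succ', ih, Finset.mul_sum, ← (Fin.consEquiv fun _ => κ).sum_comp,
      Fintype.sum_prod_type, Finset.sum_comm]
    refine Finset.sum_congr rfl fun w _ => ?_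
    rw [Finset.sum_mul]
    refine Finset.sum_congr rfl fun k _ => ?_
    simp [Fin.consEquiv, List.ofFn_succ]

namespace Matrix

variable {ι κ K : Type*}

def ShiftsWithin [Zero K] (h : ι → ℤ) (c : ℤ) (n : ℕ) (M : Matrix ι ι K) : Prop :=
  ∀ q r, M q r ≠ 0 → |h r - h q + c| ≤ n

variable {h : ι → ℤ}

theorem ShiftsWithin.mul [Fintype ι] [NonUnitalNonAssocSemiring K] {c c' : ℤ} {n n' : ℕ}
    {M N : Matrix ι ι K} (hM : M.ShiftsWithin h c n) (hN : N.ShiftsWithin h c' n') :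
    (M * N).ShiftsWithin h (c + c') (n + n') := by
  intro q r hqr
  obtain ⟨t, -, ht⟩ := Finset.exists_ne_zero_of_sum_ne_zero hqr
  calc |h r - h q + (c + c')| = |(h t - h q + c) + (h r - h t + c')| := by ring_nf
    _ ≤ |h t - h q + c| + |h r - h t + c'| := abs_add_le _ _
    _ ≤ ((n + n' : ℕ) : ℤ) := by
      push_cast
      exact add_le_add (hM q t (left_ne_zero_of_mul ht)) (hN t r (right_ne_zero_of_mul ht))

theorem shiftsWithin_one [DecidableEq ι] [Zero K] [One K] :
    (1 : Matrix ι ι K).ShiftsWithin h 0 0 := by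
  intro q r hqr
  obtain rfl : q = r := by
    by_contra hne
    exact hqr (one_apply_ne hne)
  simp

theorem ShiftsWithin.list_prod [Fintype ι] [DecidableEq ι] [Semiring K]
    {G : κ → Matrix ι ι K} {c : κ → ℤ} {n : ℕ}
    (hG : ∀ k, (G k).ShiftsWithin h (c k) n) (w : List κ) :
    (w.map G).prod.ShiftsWithin h (w.map c).sum (w.length * n) := by
  induction w with
  | nil => simpa using (shiftsWithin_one : (1 : Matrix ι ι K).ShiftsWithin h 0 0)
  | cons k w ih => simpa [add_mul, add_comm] using (hG k).mul ih

theorem ShiftsWithin.trace_eq_zero [Fintype ι] [AddCommMonoid K] {c : ℤ} {n : ℕ}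
    {M : Matrix ι ι K} (hM : M.ShiftsWithin h c n) (hc : n < |c|) : M.trace = 0 :=
  Finset.sum_eq_zero fun q _ => by
    by_contra hq
    have := hM q q hq
    simp only [sub_self, zero_add] at this
    omega

section Twist

variable [Fintype ι] [DecidableEq ι] [Field K] {N : ℕ}

theorem trace_list_prod_zpow_smul {G : κ → Matrix ι ι K} {d : κ → ℤ}
    (hG : ∀ k, (G k).ShiftsWithin h (N * d k) 1) {w : List κ} (hw : w.length < N)
    {τ : K} (hτ : τ ≠ 0) :
    ((w.map fun k => τ ^ d k • G k).prod).trace = (w.map G).prod.trace := by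
  have hsmul : (w.map fun k => τ ^ d k • G k).prod = τ ^ (w.map d).sum • (w.map G).prod := by
    induction w with
    | nil => simp
    | cons k w ih =>
      simp only [List.map_cons, List.prod_cons, List.sum_cons, ih (by simp at hw; omega),
        smul_mul_smul_comm, zpow_add₀ hτ]
  rw [hsmul, trace_smul]
  by_cases hD : (w.map d).sum = 0
  · rw [hD, zpow_zero, one_smul]
  · have hwind := ShiftsWithin.list_prod hG w
    rw [List.sum_map_mul_left] at hwind
    have hlong : ((w.length * 1 : ℕ) : ℤ) < |N * (w.map d).sum| := by
      rw [mul_one, abs_mul, Nat.abs_cast]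
      calc (w.length : ℤ) < N := by omega
        _ ≤ N * |(w.map d).sum| := le_mul_of_one_le_right (by positivity) (Int.one_le_abs hD)
    rw [hwind.trace_eq_zero hlong, smul_zero]

theorem trace_pow_sum_zpow_smul [Fintype κ] {G : κ → Matrix ι ι K} {d : κ → ℤ}
    (hG : ∀ k, (G k).ShiftsWithin h (N * d k) 1) {s : ℕ} (hs : s < N)
    {τ : K} (hτ : τ ≠ 0) :
    ((∑ k, τ ^ d k • G k) ^ s).trace = ((∑ k, G k) ^ s).trace := by
  simp only [Fintype.sum_pow_eq_sum_list_prod, trace_sum]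
  exact Finset.sum_congr rfl fun w _ =>
    trace_list_prod_zpow_smul hG (by rwa [List.length_ofFn]) hτ

theorem trace_pow_of_zpow_mul (wind : ι → ι → ℤ) {M : Matrix ι ι K}
    (hM : ∀ q r, M q r ≠ 0 → |h r - h q + N * wind q r| ≤ 1) {s : ℕ} (hs : s < N)
    {τ : K} (hτ : τ ≠ 0) :
    ((of fun q r => τ ^ wind q r * M q r) ^ s).trace = (M ^ s).trace := by
  have hsingle : ∀ k : ι × ι,
      (single k.1 k.2 (M k.1 k.2)).ShiftsWithin h (N * wind k.1 k.2) 1 := by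
    rintro ⟨q, r⟩ q' r' hne
    rw [single_apply] at hne
    split_ifs at hne with hqr
    · obtain ⟨rfl, rfl⟩ := hqr
      exact hM q r hne
    · exact absurd rfl hne
  have hM_sum : M = ∑ k : ι × ι, single k.1 k.2 (M k.1 k.2) :=
    (matrix_eq_sum_single M).trans (Fintype.sum_prod_type' fun q r => single q r (M q r)).symm
  have hτM_sum : (of fun q r => τ ^ wind q r * M q r) =
      ∑ k : ι × ι, τ ^ wind k.1 k.2 • single k.1 k.2 (M k.1 k.2) := by
    simp only [smul_single, smul_eq_mul]
    exact (sum_sum_single _).symm.trans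
      (Fintype.sum_prod_type' fun q r => single q r (τ ^ wind q r * M q r)).symm
  rw [hτM_sum, trace_pow_sum_zpow_smul hsingle hs hτ, ← hM_sum]

end Twist

end Matrix

def blockWinding {m : ℕ} (p : ℕ) (q r : Fin p × Fin m) : ℤ :=
  if (q.1 : ℕ) = p - 1 ∧ (r.1 : ℕ) = 0 then 1
  else if (q.1 : ℕ) = 0 ∧ (r.1 : ℕ) = p - 1 then -1 else 0

section Lmat

variable {m p : ℕ} {a b : ℤ → Matrix (Fin m) (Fin m) ℝ}

theorem Lmat_apply_eq_zpow_blockWinding_mul (hp : 3 ≤ p) (τ : ℂ) (q r : Fin p × Fin m) :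
    Lmat m p a b τ q r = τ ^ blockWinding p q r * Lmat m p a b 1 q r := by
  have hq := q.1.isLt
  have hr := r.1.isLt
  simp only [Lmat, of_apply, blockWinding]
  split_ifs <;> first | omega | simp

theorem abs_sub_add_blockWinding_le_one {q r : Fin p × Fin m} (hqr : Lmat m p a b 1 q r ≠ 0) :
    |((r.1 : ℕ) : ℤ) - (q.1 : ℕ) + p * blockWinding p q r| ≤ 1 := by
  have hq := q.1.isLt
  have hr := r.1.isLt
  simp only [Lmat, of_apply, blockWinding] at hqr ⊢
  rw [abs_le]
  split_ifs at hqr ⊢ <;> first | omega | simp at hqr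

end Lmat

theorem trace_powers_independent_of_tau_general (m p : ℕ) (hp : 3 ≤ p)
    (a b : ℤ → Matrix (Fin m) (Fin m) ℝ)
    (s : ℕ) (hs2 : s ≤ p - 1)
    (τ τ' : ℂ) (hτ : τ ≠ 0) (hτ' : τ' ≠ 0) :
    Matrix.trace ((Lmat m p a b τ) ^ s) = Matrix.trace ((Lmat m p a b τ') ^ s) := by
  have hs : s < p := by omega
  have untwist : ∀ σ : ℂ, σ ≠ 0 →
      (Lmat m p a b σ ^ s).trace = (Lmat m p a b 1 ^ s).trace := by
    intro σ hσ
    have hσL : Lmat m p a b σ = of fun q r => σ ^ blockWinding p q r * Lmat m p a b 1 q r := by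
      ext q r
      rw [of_apply, Lmat_apply_eq_zpow_blockWinding_mul hp]
    rw [hσL]
    exact trace_pow_of_zpow_mul (h := fun q : Fin p × Fin m => ((q.1 : ℕ) : ℤ))
      (blockWinding p) (fun q r => abs_sub_add_blockWinding_le_one) hs hσ
  rw [untwist τ hτ, untwist τ' hτ']

/-- For `p ≥ 3` and `1 ≤ s ≤ p - 1`, the power sums `Tr (L(τ)^s)` of the eigenvalues of the
Floquet matrix do not depend on `τ ≠ 0`. -/
theorem trace_powers_independent_of_tau (m p : ℕ) (hm : 1 ≤ m) (hp : 3 ≤ p)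
    (a b : ℤ → Matrix (Fin m) (Fin m) ℝ)
    (hb_sym : ∀ n : ℤ, 1 ≤ n → n ≤ p → (b n)ᵀ = b n)
    (ha_inv : ∀ n : ℤ, 1 ≤ n → n ≤ p → IsUnit (a n).det)
    (s : ℕ) (hs1 : 1 ≤ s) (hs2 : s ≤ p - 1)
    (τ τ' : ℂ) (hτ : τ ≠ 0) (hτ' : τ' ≠ 0) :
    Matrix.trace ((Lmat m p a b τ) ^ s) = Matrix.trace ((Lmat m p a b τ') ^ s) :=
  trace_powers_independent_of_tau_general m p hp a b s hs2 τ τ' hτ hτ'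
end

section
/- Let d = (∏_{n=1}^p (det a_n)²)^{1/(pm)}. Then Σ_{n=1}^p Tr(b_n² + 2·a_n·a_nᵀ) ≥ 2·p·m·d, with equality if and only if b_n = 0 and a_n·a_nᵀ = d·I_m for every n ∈ {1,…,p}. (By the trace identity Tr(L(τ)²) = Σ_{n=1}^p Tr(b_n² + 2·a_n·a_nᵀ) for |τ| = 1, this bounds from below the sum of squares of the eigenvalues of the Floquet matrix L(τ).) -/
/-!
For symmetric `b`, `Tr (b²)` is the squared Frobenius norm of `b`, so it is nonnegative and
vanishes only for `b = 0`. The Gram matrix `a aᵀ` is positive semidefinite; its trace is the sum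
of its eigenvalues and `det (a)²` is their product. AM–GM over all `p m` eigenvalues of the
`a_n a_nᵀ` therefore gives `Σ Tr (a_n a_nᵀ) ≥ p m d`, with equality iff every eigenvalue is `d`,
which by the spectral theorem means `a_n a_nᵀ = d I`.
-/

open Matrix Finset

namespace Real

variable {ι : Type*} (s : Finset ι) {z : ι → ℝ}

theorem card_mul_prod_rpow_le_sum (hz : ∀ i ∈ s, 0 ≤ z i) :
    (#s : ℝ) * (∏ i ∈ s, z i) ^ (1 / (#s : ℝ)) ≤ ∑ i ∈ s, z i := by
  rcases s.eq_empty_or_nonempty with rfl | hs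
  · simp
  have hN : (0 : ℝ) < #s := by exact_mod_cast hs.card_pos
  have hw : ∑ _i ∈ s, 1 / (#s : ℝ) = 1 := by simp [hN.ne']
  have hAMGM := geom_mean_le_arith_mean_weighted s _ z (fun _ _ ↦ by positivity) hw hz
  rw [finsetProd_rpow s z hz, ← mul_sum] at hAMGM
  calc (#s : ℝ) * (∏ i ∈ s, z i) ^ (1 / (#s : ℝ))
      ≤ #s * (1 / #s * ∑ i ∈ s, z i) := by gcongr
    _ = ∑ i ∈ s, z i := by field_simp

theorem sum_eq_card_mul_prod_rpow_iff (hz : ∀ i ∈ s, 0 ≤ z i) :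
    ∑ i ∈ s, z i = #s * (∏ i ∈ s, z i) ^ (1 / (#s : ℝ)) ↔
      ∀ j ∈ s, z j = (∏ i ∈ s, z i) ^ (1 / (#s : ℝ)) := by
  rcases s.eq_empty_or_nonempty with rfl | hs
  · simp
  have hN : (0 : ℝ) < #s := by exact_mod_cast hs.card_pos
  have hw : ∑ _i ∈ s, 1 / (#s : ℝ) = 1 := by simp [hN.ne']
  have hAMGM := geom_mean_eq_arith_mean_weighted_iff_of_pos' s _ z
    (fun _ _ ↦ by positivity) hw hz
  rw [finsetProd_rpow s z hz, ← mul_sum] at hAMGM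
  refine ⟨fun h ↦ ?_, fun h ↦ by rw [sum_congr rfl h, sum_const, nsmul_eq_mul]⟩
  have hmean : (∏ i ∈ s, z i) ^ (1 / (#s : ℝ)) = 1 / #s * ∑ i ∈ s, z i := by
    rw [h]; field_simp
  rw [hmean]
  exact hAMGM.mp hmean

end Real

namespace Matrix

variable {n : Type*} [Fintype n]

theorem IsSymm.trace_mul_self_nonneg {b : Matrix n n ℝ} (hb : b.IsSymm) : 0 ≤ trace (b * b) := by
  simpa [conjTranspose_eq_transpose_of_trivial, hb.eq] using
    (posSemidef_self_mul_conjTranspose b).trace_nonneg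

theorem IsSymm.trace_mul_self_eq_zero_iff {b : Matrix n n ℝ} (hb : b.IsSymm) :
    trace (b * b) = 0 ↔ b = 0 := by
  simpa [conjTranspose_eq_transpose_of_trivial, hb.eq] using
    trace_mul_conjTranspose_self_eq_zero_iff (A := b)

theorem isHermitian_mul_transpose_self (a : Matrix n n ℝ) : (a * aᵀ).IsHermitian := by
  simpa [conjTranspose_eq_transpose_of_trivial] using isHermitian_mul_conjTranspose_self a

variable [DecidableEq n]

theorem IsHermitian.eq_smul_one_of_eigenvalues_eq {𝕜 : Type*} [RCLike 𝕜] {A : Matrix n n 𝕜}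
    (hA : A.IsHermitian) {c : ℝ} (h : ∀ i, hA.eigenvalues i = c) : A = (c : 𝕜) • 1 := by
  have hdiag : diagonal (RCLike.ofReal ∘ hA.eigenvalues) = (c : 𝕜) • (1 : Matrix n n 𝕜) := by
    rw [smul_one_eq_diagonal]; congr 1; ext i; simp [h i]
  rw [hA.spectral_theorem, Unitary.conjStarAlgAut_apply, hdiag, mul_smul_comm, smul_mul_assoc,
    mul_one, (mem_unitaryGroup_iff).mp hA.eigenvectorUnitary.2]

end Matrix

section Gram

variable {ι n : Type*} [Fintype n] [DecidableEq n] (S : Finset ι) (a : ι → Matrix n n ℝ)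

noncomputable def gramEigenvalues (q : ι × n) : ℝ :=
  (isHermitian_mul_transpose_self (a q.1)).eigenvalues q.2

noncomputable def gramGeomMean : ℝ :=
  (∏ i ∈ S, (a i).det ^ 2) ^ (1 / (#S * Fintype.card n : ℝ))

theorem gramEigenvalues_nonneg (q : ι × n) : 0 ≤ gramEigenvalues a q := by
  have hpsd : (a q.1 * (a q.1)ᵀ).PosSemidef := by
    simpa [conjTranspose_eq_transpose_of_trivial] using posSemidef_self_mul_conjTranspose (a q.1)
  exact hpsd.eigenvalues_nonneg q.2

theorem sum_gramEigenvalues :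
    ∑ q ∈ S ×ˢ univ, gramEigenvalues a q = ∑ i ∈ S, trace (a i * (a i)ᵀ) := by
  rw [sum_product]
  refine sum_congr rfl fun i _ ↦ ?_
  simp [gramEigenvalues, (isHermitian_mul_transpose_self (a i)).trace_eq_sum_eigenvalues]

theorem prod_gramEigenvalues :
    ∏ q ∈ S ×ˢ univ, gramEigenvalues a q = ∏ i ∈ S, (a i).det ^ 2 := by
  rw [prod_product]
  refine prod_congr rfl fun i _ ↦ ?_
  have h := (isHermitian_mul_transpose_self (a i)).det_eq_prod_eigenvalues
  rw [det_mul, det_transpose] at h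
  simpa [gramEigenvalues, sq] using h.symm

theorem card_mul_gramGeomMean_le_sum_trace :
    (#S * Fintype.card n : ℝ) * gramGeomMean S a ≤ ∑ i ∈ S, trace (a i * (a i)ᵀ) := by
  have h := Real.card_mul_prod_rpow_le_sum (S ×ˢ univ) fun q _ ↦ gramEigenvalues_nonneg a q
  rwa [sum_gramEigenvalues, prod_gramEigenvalues, card_product, card_univ, Nat.cast_mul] at h

theorem sum_trace_eq_card_mul_gramGeomMean_iff :
    ∑ i ∈ S, trace (a i * (a i)ᵀ) = (#S * Fintype.card n : ℝ) * gramGeomMean S a ↔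
      ∀ i ∈ S, a i * (a i)ᵀ = gramGeomMean S a • 1 := by
  have h := Real.sum_eq_card_mul_prod_rpow_iff (S ×ˢ univ) fun q _ ↦ gramEigenvalues_nonneg a q
  rw [sum_gramEigenvalues, prod_gramEigenvalues, card_product, card_univ, Nat.cast_mul] at h
  refine ⟨fun heq i hi ↦ ?_, fun heq ↦ ?_⟩
  · exact (isHermitian_mul_transpose_self (a i)).eq_smul_one_of_eigenvalues_eq
      fun j ↦ h.mp heq (i, j) (mem_product.mpr ⟨hi, mem_univ j⟩)
  · rw [sum_congr rfl fun i hi ↦ by rw [heq i hi]]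
    simp only [trace_smul, trace_one, smul_eq_mul, sum_const, nsmul_eq_mul]
    ring

end Gram

theorem trace_square_lower_bound_general (m p : ℕ)
    (a b : ℤ → Matrix (Fin m) (Fin m) ℝ)
    (hb_sym : ∀ n : ℤ, 1 ≤ n → n ≤ p → (b n)ᵀ = b n)
    (d : ℝ)
    (hd : d = (∏ n ∈ Finset.Icc (1 : ℤ) (p : ℤ), ((a n).det) ^ 2) ^
      ((1 : ℝ) / ((p : ℝ) * (m : ℝ)))) :
    2 * (p : ℝ) * (m : ℝ) * d ≤
      ∑ n ∈ Finset.Icc (1 : ℤ) (p : ℤ), Matrix.trace (b n * b n + 2 • (a n * (a n)ᵀ)) ∧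
    ((∑ n ∈ Finset.Icc (1 : ℤ) (p : ℤ), Matrix.trace (b n * b n + 2 • (a n * (a n)ᵀ)) =
        2 * (p : ℝ) * (m : ℝ) * d) ↔
      (∀ n : ℤ, 1 ≤ n → n ≤ p →
        b n = 0 ∧ a n * (a n)ᵀ = d • (1 : Matrix (Fin m) (Fin m) ℝ))) := by
  set S := Icc (1 : ℤ) p
  have hcard : (#S * Fintype.card (Fin m) : ℝ) = p * m := by simp [S]
  obtain rfl : d = gramGeomMean S a := by simpa [gramGeomMean, S] using hd
  have hb (n : ℤ) (hn : n ∈ S) : (b n).IsSymm := hb_sym n (mem_Icc.1 hn).1 (mem_Icc.1 hn).2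
  have hsplit : ∑ n ∈ S, trace (b n * b n + 2 • (a n * (a n)ᵀ)) =
      ∑ n ∈ S, trace (b n * b n) + 2 * ∑ n ∈ S, trace (a n * (a n)ᵀ) := by
    simp only [trace_add, two_nsmul, two_mul, sum_add_distrib]
  have hB := sum_nonneg fun n hn ↦ (hb n hn).trace_mul_self_nonneg
  have hA := card_mul_gramGeomMean_le_sum_trace S a
  rw [hcard] at hA
  refine ⟨by linarith, ?_⟩
  calc _ ↔ ∑ n ∈ S, trace (b n * b n) = 0 ∧
        ∑ n ∈ S, trace (a n * (a n)ᵀ) = p * m * gramGeomMean S a := by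
        rw [hsplit]
        exact ⟨fun h ↦ ⟨by linarith, by linarith⟩, fun h ↦ by rw [h.1, h.2]; ring⟩
    _ ↔ _ := by
      rw [sum_eq_zero_iff_of_nonneg fun n hn ↦ (hb n hn).trace_mul_self_nonneg, ← hcard,
        sum_trace_eq_card_mul_gramGeomMean_iff]
      refine ⟨fun ⟨hB0, hA0⟩ n h1 h2 ↦ ?_, fun h ↦ ⟨fun n hn ↦ ?_, fun n hn ↦ ?_⟩⟩
      · have hn : n ∈ S := mem_Icc.2 ⟨h1, h2⟩
        exact ⟨(hb n hn).trace_mul_self_eq_zero_iff.1 (hB0 n hn), hA0 n hn⟩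
      · rw [(h n (mem_Icc.1 hn).1 (mem_Icc.1 hn).2).1]; simp
      · exact (h n (mem_Icc.1 hn).1 (mem_Icc.1 hn).2).2

/-- With `d = (∏ (det a_n)²)^{1/(pm)}`, one has
`Σ Tr (b_n² + 2 a_n a_nᵀ) ≥ 2 p m d`, with equality iff `b_n = 0` and
`a_n a_nᵀ = d I_m` for all `n`. -/
theorem trace_square_lower_bound (m p : ℕ) (hm : 1 ≤ m) (hp : 1 ≤ p)
    (a b : ℤ → Matrix (Fin m) (Fin m) ℝ)
    (hb_sym : ∀ n : ℤ, 1 ≤ n → n ≤ p → (b n)ᵀ = b n)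
    (ha_inv : ∀ n : ℤ, 1 ≤ n → n ≤ p → IsUnit (a n).det)
    (d : ℝ)
    (hd : d = (∏ n ∈ Finset.Icc (1 : ℤ) (p : ℤ), ((a n).det) ^ 2) ^
      ((1 : ℝ) / ((p : ℝ) * (m : ℝ)))) :
    2 * (p : ℝ) * (m : ℝ) * d ≤
      ∑ n ∈ Finset.Icc (1 : ℤ) (p : ℤ), Matrix.trace (b n * b n + 2 • (a n * (a n)ᵀ)) ∧
    ((∑ n ∈ Finset.Icc (1 : ℤ) (p : ℤ), Matrix.trace (b n * b n + 2 • (a n * (a n)ᵀ)) =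
        2 * (p : ℝ) * (m : ℝ) * d) ↔
      (∀ n : ℤ, 1 ≤ n → n ≤ p →
        b n = 0 ∧ a n * (a n)ᵀ = d • (1 : Matrix (Fin m) (Fin m) ℝ))) :=
  trace_square_lower_bound_general m p a b hb_sym d hd
end
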